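/- arXiv:1808.06356 — 4 statements merged into one kernel-verified Lean document; each statement's English description precedes it below -/
import Mathlib

section
/- For every integer L ≥ 2, the logarithm of the multinomial NML regret is subadditive in the sample size: for all nonnegative integers a and b, R(L, a + b) ≤ R(L, a) · R(L, b). -/
open Finset

/-- The multinomial NML regret `R(L, n)`: the sum over all count vectors
`(h_1, …, h_L)` with `h_1 + ⋯ + h_L = n` of the maximum likelihood
`(n! / (h_1! ⋯ h_L!)) · ∏_v (h_v / n)^{h_v}` (with the convention `0^0 = 1`). -/
noncomputable def regret (L n : ℕ) : ℝ :=
  ∑ h ∈ Finset.Nat.antidiagonalTuple L n,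
    (Nat.multinomial Finset.univ h : ℝ) * ∏ v, ((h v : ℝ) / (n : ℝ)) ^ (h v)

/-!
Split a sample of size `a + b` into its first `a` and its last `b` observations. By the
multinomial Vandermonde identity, `R(L, a + b)` becomes a sum over pairs of count vectors
`(g, g')` of the multinomial coefficients of `g` and `g'` times the maximized likelihood
`ML(g + g')`. The maximum-likelihood distribution `q` of `g + g'` is a candidate distribution
for each half, so by Gibbs' inequality `ML(g + g') = ∏ q ^ g · ∏ q ^ g' ≤ ML(g) · ML(g')`;
summing over the pairs gives `R(L, a) · R(L, b)`.
-/

variable {ι : Type*} [Fintype ι]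

namespace Nat

variable [DecidableEq ι]

open MvPolynomial in
theorem multinomial_vandermonde {a b : ℕ} {h : ι → ℕ} (hh : h ∈ piAntidiag univ (a + b)) :
    multinomial univ h = ∑ g ∈ piAntidiag univ a, ∑ g' ∈ piAntidiag univ b,
      if g + g' = h then multinomial univ g * multinomial univ g' else 0 := by
  set d := Finsupp.equivFunOnFinite.symm h
  have coeff_monomial : ∀ k : ι → ℕ,
      coeff d (∏ i, (X i : MvPolynomial ι ℕ) ^ k i) = if k = h then 1 else 0 := by
    intro k
    rw [coeff_prod_X_pow]
    refine if_congr ?_ rfl rfl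
    simp [d, Finsupp.ext_iff, funext_iff, eq_comm]
  have expand : ∀ n, (∑ i, X i : MvPolynomial ι ℕ) ^ n =
      ∑ k ∈ piAntidiag univ n, multinomial univ k • ∏ i, X i ^ k i := by
    intro n
    simp only [sum_pow_eq_sum_piAntidiag, nsmul_eq_mul]
  calc multinomial univ h = coeff d ((∑ i, X i : MvPolynomial ι ℕ) ^ (a + b)) := by
        rw [expand, coeff_sum]
        simp only [coeff_smul, coeff_monomial, smul_eq_mul, mul_ite, mul_one, mul_zero]
        rw [sum_ite_eq', if_pos hh]
    _ = coeff d ((∑ i, X i : MvPolynomial ι ℕ) ^ a * (∑ i, X i) ^ b) := by rw [pow_add]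
    _ = _ := by
        rw [expand, expand, sum_mul_sum]
        simp only [coeff_sum]
        refine sum_congr rfl fun g _ => sum_congr rfl fun g' _ => ?_
        rw [smul_mul_smul_comm, ← prod_mul_distrib, coeff_smul]
        simp only [← pow_add, ← Pi.add_apply g g', coeff_monomial]
        simp

theorem sum_multinomial_mul_add {R : Type*} [CommSemiring R] (a b : ℕ) (F : (ι → ℕ) → R) :
    ∑ h ∈ piAntidiag (univ : Finset ι) (a + b), multinomial univ h * F h =
      ∑ g ∈ piAntidiag univ a, ∑ g' ∈ piAntidiag univ b,
        multinomial univ g * multinomial univ g' * F (g + g') := by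
  have add_mem : ∀ g ∈ piAntidiag (univ : Finset ι) a, ∀ g' ∈ piAntidiag univ b,
      g + g' ∈ piAntidiag univ (a + b) := by
    intro g hg g' hg'
    simp_all [sum_add_distrib]
  calc ∑ h ∈ piAntidiag (univ : Finset ι) (a + b), multinomial univ h * F h
      = ∑ h ∈ piAntidiag (univ : Finset ι) (a + b),
          ∑ g ∈ piAntidiag univ a, ∑ g' ∈ piAntidiag univ b,
          if g + g' = h then (multinomial univ g * multinomial univ g' : ℕ) * F h else 0 := by
        refine sum_congr rfl fun h hh => ?_
        rw [multinomial_vandermonde hh]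
        push_cast
        simp only [sum_mul, ite_mul, zero_mul]
    _ = _ := by
        rw [sum_comm]
        refine sum_congr rfl fun g hg => ?_
        rw [sum_comm]
        refine sum_congr rfl fun g' hg' => ?_
        rw [sum_ite_eq, if_pos (add_mem g hg g' hg'), Nat.cast_mul]

end Nat

namespace Real

theorem prod_rpow_le_prod_rpow_self {w q : ι → ℝ} (hw : ∀ i, 0 ≤ w i) (hw1 : ∑ i, w i = 1)
    (hq : ∀ i, 0 ≤ q i) (hq1 : ∑ i, q i ≤ 1) : ∏ i, q i ^ w i ≤ ∏ i, w i ^ w i := by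
  have cancel : ∀ i, w i = 0 ∨ w i * (q i / w i) = q i :=
    fun i => (eq_or_ne (w i) 0).imp_right (mul_div_cancel₀ _)
  -- valid also where `w i = 0`, thanks to `q i / 0 = 0` and `x ^ 0 = 1`
  have factor : ∀ i, q i ^ w i = w i ^ w i * (q i / w i) ^ w i := by
    intro i
    rw [← mul_rpow (hw i) (div_nonneg (hq i) (hw i))]
    rcases cancel i with h0 | h
    · simp [h0]
    · rw [h]
  have am_gm : ∏ i, (q i / w i) ^ w i ≤ 1 :=
    calc ∏ i, (q i / w i) ^ w i ≤ ∑ i, w i * (q i / w i) :=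
          geom_mean_le_arith_mean_weighted univ w _ (fun i _ => hw i) hw1
            (fun i _ => div_nonneg (hq i) (hw i))
      _ ≤ ∑ i, q i := sum_le_sum fun i _ => by
            rcases cancel i with h0 | h
            · simp [h0, hq i]
            · rw [h]
      _ ≤ 1 := hq1
  calc ∏ i, q i ^ w i = (∏ i, w i ^ w i) * ∏ i, (q i / w i) ^ w i := by
        rw [← prod_mul_distrib]
        exact prod_congr rfl fun i _ => factor i
    _ ≤ ∏ i, w i ^ w i :=
        mul_le_of_le_one_right (prod_nonneg fun i _ => rpow_nonneg (hw i) _) am_gm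

end Real

noncomputable def maxLikelihood (n : ℕ) (h : ι → ℕ) : ℝ := ∏ v, ((h v : ℝ) / n) ^ h v

theorem maxLikelihood_nonneg (n : ℕ) (h : ι → ℕ) : 0 ≤ maxLikelihood n h := by
  unfold maxLikelihood; positivity

theorem prod_pow_le_maxLikelihood {n : ℕ} {g : ι → ℕ} (hg : ∑ i, g i = n) {q : ι → ℝ}
    (hq : ∀ i, 0 ≤ q i) (hq1 : ∑ i, q i ≤ 1) : ∏ i, q i ^ g i ≤ maxLikelihood n g := by
  rcases n.eq_zero_or_pos with rfl | hn
  · have hg0 : ∀ i, g i = 0 := by simpa using hg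
    simp [maxLikelihood, hg0]
  set w : ι → ℝ := fun i => (g i : ℝ) / n
  have pow_eq : ∀ x : ℝ, 0 ≤ x → ∀ i, x ^ g i = (x ^ w i) ^ n := by
    intro x hx i
    rw [← Real.rpow_natCast, ← Real.rpow_natCast, ← Real.rpow_mul hx]
    congr 1
    exact (div_mul_cancel₀ _ (by positivity)).symm
  have hw1 : ∑ i, w i = 1 := by
    rw [← sum_div, div_eq_one_iff_eq (by positivity)]
    exact_mod_cast hg
  calc ∏ i, q i ^ g i = (∏ i, q i ^ w i) ^ n := by
        rw [← prod_pow]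
        exact prod_congr rfl fun i _ => pow_eq _ (hq i) i
    _ ≤ (∏ i, w i ^ w i) ^ n := by
        refine pow_le_pow_left₀ (prod_nonneg fun i _ => Real.rpow_nonneg (hq i) _) ?_ n
        exact Real.prod_rpow_le_prod_rpow_self (fun i => by positivity) hw1 hq hq1
    _ = maxLikelihood n g := by
        rw [maxLikelihood, ← prod_pow]
        exact prod_congr rfl fun i _ => (pow_eq _ (by positivity) i).symm

theorem maxLikelihood_add_le {a b : ℕ} {g g' : ι → ℕ} (hg : ∑ i, g i = a)
    (hg' : ∑ i, g' i = b) :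
    maxLikelihood (a + b) (g + g') ≤ maxLikelihood a g * maxLikelihood b g' := by
  set q : ι → ℝ := fun i => ((g + g') i : ℝ) / (a + b : ℕ)
  have hq : ∀ i, 0 ≤ q i := fun i => by positivity
  have hq1 : ∑ i, q i ≤ 1 := by
    have hsum : ∑ i, (g + g') i = a + b := by simp [sum_add_distrib, hg, hg']
    rw [← sum_div, ← Nat.cast_sum, hsum]
    exact div_self_le_one _
  calc maxLikelihood (a + b) (g + g') = (∏ i, q i ^ g i) * ∏ i, q i ^ g' i := by
        simp only [maxLikelihood, Pi.add_apply, pow_add, prod_mul_distrib, q]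
    _ ≤ maxLikelihood a g * maxLikelihood b g' :=
        mul_le_mul (prod_pow_le_maxLikelihood hg hq hq1) (prod_pow_le_maxLikelihood hg' hq hq1)
          (prod_nonneg fun i _ => pow_nonneg (hq i) _) (maxLikelihood_nonneg _ _)

theorem regret_eq_sum_piAntidiag (L n : ℕ) :
    regret L n =
      ∑ h ∈ piAntidiag (univ : Finset (Fin L)) n, Nat.multinomial univ h * maxLikelihood n h := by
  rw [piAntidiag_univ_fin_eq_antidiagonalTuple]
  rfl

theorem regret_subadditive_general (L : ℕ) (a b : ℕ) :
    regret L (a + b) ≤ regret L a * regret L b := by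
  simp only [regret_eq_sum_piAntidiag, Nat.sum_multinomial_mul_add, sum_mul_sum]
  refine sum_le_sum fun g hg => sum_le_sum fun g' hg' => ?_
  rw [mem_piAntidiag] at hg hg'
  calc (Nat.multinomial univ g * Nat.multinomial univ g' : ℝ) * maxLikelihood (a + b) (g + g')
      ≤ (Nat.multinomial univ g * Nat.multinomial univ g' : ℝ) *
          (maxLikelihood a g * maxLikelihood b g') :=
        mul_le_mul_of_nonneg_left (maxLikelihood_add_le hg.1 hg'.1) (by positivity)
    _ = _ := by ring

/-- For `L ≥ 2`, the logarithm of the multinomial NML regret is subadditive in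
the sample size: `R(L, a + b) ≤ R(L, a) · R(L, b)` for all `a, b : ℕ`. -/
theorem regret_subadditive (L : ℕ) (hL : 2 ≤ L) (a b : ℕ) :
    regret L (a + b) ≤ regret L a * regret L b :=
  regret_subadditive_general L a b
end

section
/- Refining a partition of the sample can only increase the total log-regret: let L ≥ 2 be an integer, let J and I be finite index sets, let l : J → ℕ assign cell sizes, let f : J → I group the cells, and for each i ∈ I set r(i) = ∑_{j ∈ f⁻¹(i)} l(j). Then ∑_{i ∈ I} log R(L, r(i)) ≤ ∑_{j ∈ J} log R(L, l(j)). -/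
open Finset

lemma choose_vandermonde_pi {ι : Type*} [DecidableEq ι] (s : Finset ι) (h : ι → ℕ) (n : ℕ) :
    ∑ a ∈ Finset.piAntidiag s n, ∏ i ∈ s, (h i).choose (a i) = (∑ i ∈ s, h i).choose n := by
  induction s using Finset.cons_induction generalizing n with
  | empty =>
    rw [Finset.piAntidiag_empty]
    cases n <;> simp
  | cons i s hi ih =>
    rw [Finset.piAntidiag_cons hi n, Finset.sum_disjiUnion, Finset.sum_cons,
      Nat.add_choose_eq]
    refine Finset.sum_congr rfl fun p hp => ?_
    rw [Finset.sum_map]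
    have : ∀ g ∈ Finset.piAntidiag s p.2,
        ∏ j ∈ cons i s hi, (h j).choose
          ((addRightEmbedding fun t => if t = i then p.1 else 0) g j)
        = (h i).choose p.1 * ∏ j ∈ s, (h j).choose (g j) := by
      intro g hg
      rw [Finset.mem_piAntidiag] at hg
      rw [Finset.prod_cons]
      have hgi : g i = 0 := by
        by_contra hne
        exact hi (hg.2 i hne)
      congr 1
      · simp [addRightEmbedding_apply, hgi]
      · refine Finset.prod_congr rfl fun j hj => ?_
        have : j ≠ i := fun e => hi (e ▸ hj)
        simp [addRightEmbedding_apply, this]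
    rw [Finset.sum_congr rfl this, ← Finset.mul_sum, ih]

-- per-term identity
lemma mult_split {L : ℕ} (a b : Fin L → ℕ) {n m : ℕ}
    (han : ∑ v, a v = n) (hbm : ∑ v, b v = m) :
    Nat.multinomial Finset.univ a * Nat.multinomial Finset.univ b * (n + m).factorial
      = n.factorial * m.factorial * (∏ v, (a v + b v).choose (a v))
        * Nat.multinomial Finset.univ (a + b) := by
  have key := Nat.multinomial_spec Finset.univ a
  have key2 := Nat.multinomial_spec Finset.univ b
  have key3 := Nat.multinomial_spec Finset.univ (a + b)
  rw [han] at key; rw [hbm] at key2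
  have hab : ∑ v, (a + b) v = n + m := by
    simp [Finset.sum_add_distrib, han, hbm]
  rw [hab] at key3
  have P : 0 < (∏ v, (a v).factorial) * ∏ v, (b v).factorial :=
    Nat.mul_pos (Finset.prod_pos fun _ _ => Nat.factorial_pos _)
      (Finset.prod_pos fun _ _ => Nat.factorial_pos _)
  refine Nat.eq_of_mul_eq_mul_left P ?_
  have e1 : (∏ v, (a v).factorial) * (∏ v, (b v).factorial)
      * (n.factorial * m.factorial * (∏ v, (a v + b v).choose (a v))
        * Nat.multinomial Finset.univ (a + b))
      = n.factorial * m.factorial *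
        ((∏ v, ((a v + b v).choose (a v) * (a v).factorial * (b v).factorial))
          * Nat.multinomial Finset.univ (a + b)) := by
    rw [Finset.prod_mul_distrib, Finset.prod_mul_distrib]; ring
  rw [e1]
  have e2 : ∀ v, (a v + b v).choose (a v) * (a v).factorial * (b v).factorial
      = (a v + b v).factorial := by
    intro v
    have := Nat.choose_mul_factorial_mul_factorial (Nat.le_add_right (a v) (b v))
    simpa using this
  rw [Finset.prod_congr rfl (fun v _ => e2 v)]
  have e3 : (∏ v, (a v + b v).factorial) = ∏ v, ((a + b) v).factorial := rfl
  rw [e3, key3]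
  calc (∏ v, (a v).factorial) * (∏ v, (b v).factorial)
        * (Nat.multinomial Finset.univ a * Nat.multinomial Finset.univ b * (n + m).factorial)
      = ((∏ v, (a v).factorial) * Nat.multinomial Finset.univ a)
        * (((∏ v, (b v).factorial) * Nat.multinomial Finset.univ b) * (n + m).factorial) := by
        ring
    _ = n.factorial * (m.factorial * (n + m).factorial) := by rw [key, key2]
    _ = n.factorial * m.factorial * (n + m).factorial := by ring

lemma mult_vandermonde {L : ℕ} (n m : ℕ) (h : Fin L → ℕ) (hh : ∑ v, h v = n + m) :
    ∑ p ∈ (Finset.Nat.antidiagonalTuple L n ×ˢ Finset.Nat.antidiagonalTuple L m).filter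
        (fun p => p.1 + p.2 = h),
      Nat.multinomial Finset.univ p.1 * Nat.multinomial Finset.univ p.2
    = Nat.multinomial Finset.univ h := by
  classical
  -- reindex by the first component
  set t₀ : Finset (Fin L → ℕ) :=
    (Finset.Nat.antidiagonalTuple L n).filter (fun a => ∀ v, a v ≤ h v) with ht₀
  have step1 : ∑ p ∈ (Finset.Nat.antidiagonalTuple L n ×ˢ Finset.Nat.antidiagonalTuple L m).filter
        (fun p => p.1 + p.2 = h),
      Nat.multinomial Finset.univ p.1 * Nat.multinomial Finset.univ p.2
      = ∑ a ∈ t₀, Nat.multinomial Finset.univ a * Nat.multinomial Finset.univ (h - a) := by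
    refine Finset.sum_nbij' (fun p => p.1) (fun a => (a, h - a)) ?_ ?_ ?_ ?_ ?_
    · intro p hp
      simp only [Finset.mem_filter, Finset.mem_product, Finset.Nat.mem_antidiagonalTuple] at hp
      simp only [ht₀, Finset.mem_filter, Finset.Nat.mem_antidiagonalTuple]
      exact ⟨hp.1.1, fun v => by
        have := congr_fun hp.2 v; simp only [Pi.add_apply] at this; omega⟩
    · intro a ha
      simp only [ht₀, Finset.mem_filter, Finset.Nat.mem_antidiagonalTuple] at ha
      have hsum : ∑ v, (h - a) v = m := by
        have : ∑ v, (h - a) v = (∑ v, h v) - ∑ v, a v := by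
          rw [← Finset.sum_tsub_distrib]
          · rfl
          · exact fun v _ => ha.2 v
        omega
      simp only [Finset.mem_filter, Finset.mem_product, Finset.Nat.mem_antidiagonalTuple]
      refine ⟨⟨ha.1, hsum⟩, ?_⟩
      funext v
      simp only [Pi.add_apply, Pi.sub_apply]
      have := ha.2 v; omega
    · intro p hp
      simp only [Finset.mem_filter, Finset.mem_product] at hp
      have : h - p.1 = p.2 := by
        funext v
        have := congr_fun hp.2 v
        simp only [Pi.add_apply, Pi.sub_apply] at this ⊢
        omega
      exact Prod.ext rfl this
    · intro a ha; rfl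
    · intro p hp
      simp only [Finset.mem_filter, Finset.mem_product] at hp
      have : h - p.1 = p.2 := by
        funext v
        have := congr_fun hp.2 v
        simp only [Pi.add_apply, Pi.sub_apply] at this ⊢
        omega
      rw [this]
  rw [step1]
  refine Nat.eq_of_mul_eq_mul_right (Nat.factorial_pos (n + m)) ?_
  rw [Finset.sum_mul]
  have step2 : ∀ a ∈ t₀,
      Nat.multinomial Finset.univ a * Nat.multinomial Finset.univ (h - a) * (n + m).factorial
      = n.factorial * m.factorial * Nat.multinomial Finset.univ h
        * ∏ v, (h v).choose (a v) := by
    intro a ha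
    simp only [ht₀, Finset.mem_filter, Finset.Nat.mem_antidiagonalTuple] at ha
    have hsum : ∑ v, (h - a) v = m := by
      have : ∑ v, (h - a) v = (∑ v, h v) - ∑ v, a v := by
        rw [← Finset.sum_tsub_distrib]
        · rfl
        · exact fun v _ => ha.2 v
      omega
    have hrec : a + (h - a) = h := by
      funext v; have := ha.2 v; simp only [Pi.add_apply, Pi.sub_apply]; omega
    have := mult_split a (h - a) ha.1 hsum
    rw [hrec] at this
    rw [this]
    have : ∀ v, (a v + (h - a) v).choose (a v) = (h v).choose (a v) := by
      intro v; have := ha.2 v; simp only [Pi.sub_apply]; congr 1; omega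
    rw [Finset.prod_congr rfl (fun v _ => this v)]
    ring
  rw [Finset.sum_congr rfl step2, ← Finset.mul_sum]
  have step3 : ∑ a ∈ t₀, ∏ v, (h v).choose (a v)
      = ∑ a ∈ Finset.Nat.antidiagonalTuple L n, ∏ v, (h v).choose (a v) := by
    refine Finset.sum_subset (Finset.filter_subset _ _) ?_
    intro a ha hna
    simp only [ht₀, Finset.mem_filter, ha, true_and, not_forall, not_le] at hna
    obtain ⟨v, hv⟩ := hna
    exact Finset.prod_eq_zero (Finset.mem_univ v) (Nat.choose_eq_zero_of_lt hv)
  rw [step3, ← Finset.piAntidiag_univ_fin_eq_antidiagonalTuple]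
  rw [choose_vandermonde_pi Finset.univ h n, hh]
  have key : (n + m).choose n * n.factorial * m.factorial = (n+m).factorial := by
    rw [Nat.choose_symm_add]
    exact Nat.add_choose_mul_factorial_mul_factorial n m
  calc n.factorial * m.factorial * Nat.multinomial Finset.univ h * (n + m).choose n
      = Nat.multinomial Finset.univ h * ((n+m).choose n * n.factorial * m.factorial) := by ring
    _ = Nat.multinomial Finset.univ h * (n + m).factorial := by rw [key]

-- maximum likelihood inequality
lemma ml_ineq {L n : ℕ} (a : Fin L → ℕ) (ha : ∑ v, a v = n)
    (θ : Fin L → ℝ) (hθ0 : ∀ v, 0 ≤ θ v) (hθ1 : ∑ v, θ v ≤ 1) :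
    ∏ v, θ v ^ a v ≤ ∏ v, ((a v : ℝ) / (n : ℝ)) ^ a v := by
  rcases Nat.eq_zero_or_pos n with hn | hn
  · subst hn
    have : ∀ v, a v = 0 := by
      intro v
      have := Finset.sum_eq_zero_iff.mp ha v (Finset.mem_univ v)
      exact this
    simp [this]
  · set s : Finset (Fin L) := Finset.univ.filter (fun v => a v ≠ 0) with hs
    have hnne : (n : ℝ) ≠ 0 := Nat.cast_ne_zero.mpr hn.ne'
    have hprod_restr : ∀ (g : Fin L → ℝ), ∏ v, g v ^ a v = ∏ v ∈ s, g v ^ a v := by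
      intro g
      rw [hs]
      rw [← Finset.prod_filter_mul_prod_filter_not Finset.univ (fun v => a v ≠ 0)
        (fun v => g v ^ a v)]
      have : ∏ v ∈ Finset.univ.filter (fun v => ¬ a v ≠ 0), g v ^ a v = 1 := by
        refine Finset.prod_eq_one fun v hv => ?_
        simp only [Finset.mem_filter, not_not] at hv
        rw [hv.2, pow_zero]
      rw [this, mul_one]
    rw [hprod_restr θ, hprod_restr (fun v => (a v : ℝ) / n)]
    set w : Fin L → ℝ := fun v => (a v : ℝ) / n with hw
    set z : Fin L → ℝ := fun v => θ v * n / (a v : ℝ) with hz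
    have hz0 : ∀ v ∈ s, 0 ≤ z v := fun v _ => by
      apply div_nonneg (mul_nonneg (hθ0 v) (Nat.cast_nonneg n)) (Nat.cast_nonneg _)
    have hw0 : ∀ v ∈ s, 0 ≤ w v := fun v _ =>
      div_nonneg (Nat.cast_nonneg _) (Nat.cast_nonneg _)
    have hw1 : ∑ v ∈ s, w v = 1 := by
      rw [hw, ← Finset.sum_div]
      rw [div_eq_one_iff_eq hnne]
      rw [← Nat.cast_sum]
      norm_cast
      rw [hs, Finset.sum_filter_ne_zero]
      exact ha
    have hgm := Real.geom_mean_le_arith_mean_weighted s w z hw0 hw1 hz0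
    have hsum : ∑ v ∈ s, w v * z v ≤ 1 := by
      have : ∀ v ∈ s, w v * z v = θ v := by
        intro v hv
        simp only [hs, Finset.mem_filter] at hv
        have hav : (a v : ℝ) ≠ 0 := Nat.cast_ne_zero.mpr hv.2
        rw [hw, hz]
        field_simp
      rw [Finset.sum_congr rfl this]
      calc ∑ v ∈ s, θ v ≤ ∑ v, θ v := Finset.sum_le_sum_of_subset_of_nonneg
            (Finset.filter_subset _ _) (fun v _ _ => hθ0 v)
        _ ≤ 1 := hθ1
    have hgm1 : ∏ v ∈ s, z v ^ (w v) ≤ 1 := le_trans hgm hsum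
    -- raise to n-th power
    have hzpow : ∏ v ∈ s, z v ^ a v ≤ 1 := by
      have hpn : (∏ v ∈ s, z v ^ (w v)) ^ n ≤ 1 :=
        pow_le_one₀ (Finset.prod_nonneg fun v hv => Real.rpow_nonneg (hz0 v hv) _) hgm1
      calc ∏ v ∈ s, z v ^ a v = (∏ v ∈ s, z v ^ (w v)) ^ n := by
            rw [← Finset.prod_pow]
            refine Finset.prod_congr rfl fun v hv => ?_
            rw [← Real.rpow_natCast (z v ^ w v) n, ← Real.rpow_natCast (z v) (a v),
              ← Real.rpow_mul (hz0 v hv)]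
            congr 1
            rw [hw]
            field_simp
        _ ≤ 1 := hpn
    -- conclude
    have hθz : ∀ v ∈ s, θ v ^ a v = z v ^ a v * w v ^ a v := by
      intro v hv
      simp only [hs, Finset.mem_filter] at hv
      have hav : (a v : ℝ) ≠ 0 := Nat.cast_ne_zero.mpr hv.2
      rw [← mul_pow]
      congr 1
      rw [hz, hw]
      field_simp
    rw [Finset.prod_congr rfl hθz, Finset.prod_mul_distrib]
    calc (∏ v ∈ s, z v ^ a v) * ∏ v ∈ s, w v ^ a v
        ≤ 1 * ∏ v ∈ s, w v ^ a v := by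
          apply mul_le_mul_of_nonneg_right hzpow
          exact Finset.prod_nonneg fun v hv => pow_nonneg (hw0 v hv) _
      _ = ∏ v ∈ s, w v ^ a v := one_mul _

lemma regret_zero (L : ℕ) : regret L 0 = 1 := by
  rw [regret, Finset.Nat.antidiagonalTuple_zero_right, Finset.sum_singleton]
  simp [Nat.multinomial]

lemma one_le_regret {L : ℕ} (hL : 1 ≤ L) (n : ℕ) : 1 ≤ regret L n := by
  rcases Nat.eq_zero_or_pos n with hn | hn
  · rw [hn, regret_zero]
  have hL' : 0 < L := hL
  set e : Fin L → ℕ := fun v => if v = ⟨0, hL'⟩ then n else 0 with he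
  have hesum : ∑ v, e v = n := by
    rw [he, Finset.sum_ite_eq' Finset.univ (⟨0, hL'⟩ : Fin L) (fun _ => n)]
    simp
  have hmem : e ∈ Finset.Nat.antidiagonalTuple L n :=
    Finset.Nat.mem_antidiagonalTuple.mpr hesum
  have hterm : (1 : ℝ) ≤ (Nat.multinomial Finset.univ e : ℝ)
      * ∏ v, ((e v : ℝ) / (n : ℝ)) ^ (e v) := by
    have h1 : ∏ v, ((e v : ℝ) / (n : ℝ)) ^ (e v) = 1 := by
      refine Finset.prod_eq_one fun v _ => ?_
      rcases eq_or_ne v ⟨0, hL'⟩ with hv | hv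
      · simp only [he, hv, if_pos rfl]
        rw [div_self (Nat.cast_ne_zero.mpr hn.ne'), one_pow]
      · simp [he, hv]
    rw [h1, mul_one]
    exact_mod_cast Nat.one_le_iff_ne_zero.mpr (Nat.multinomial_pos _ _).ne'
  calc (1 : ℝ) ≤ _ := hterm
    _ ≤ regret L n := by
      refine Finset.single_le_sum (f := fun h => (Nat.multinomial Finset.univ h : ℝ)
        * ∏ v, ((h v : ℝ) / (n : ℝ)) ^ (h v)) (fun h _ => ?_) hmem
      exact mul_nonneg (Nat.cast_nonneg _) (Finset.prod_nonneg fun v _ =>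
        pow_nonneg (div_nonneg (Nat.cast_nonneg _) (Nat.cast_nonneg _)) _)

lemma regret_add_le (L n m : ℕ) : regret L (n + m) ≤ regret L n * regret L m := by
  rcases Nat.eq_zero_or_pos (n + m) with hN | hN
  · have hn : n = 0 := by omega
    have hm : m = 0 := by omega
    subst hn; subst hm
    simp [regret_zero]
  classical
  set N := n + m with hNdef
  -- expand the product of the two regrets
  have hexp : regret L n * regret L m =
      ∑ p ∈ Finset.Nat.antidiagonalTuple L n ×ˢ Finset.Nat.antidiagonalTuple L m,
        ((Nat.multinomial Finset.univ p.1 : ℝ) * ∏ v, ((p.1 v : ℝ) / (n : ℝ)) ^ (p.1 v)) *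
        ((Nat.multinomial Finset.univ p.2 : ℝ) * ∏ v, ((p.2 v : ℝ) / (m : ℝ)) ^ (p.2 v)) := by
    rw [regret, regret, Finset.sum_mul_sum, ← Finset.sum_product']
  rw [hexp]
  set F : (Fin L → ℕ) × (Fin L → ℕ) → ℝ := fun p =>
    ((Nat.multinomial Finset.univ p.1 : ℝ) * ∏ v, ((p.1 v : ℝ) / (n : ℝ)) ^ (p.1 v)) *
    ((Nat.multinomial Finset.univ p.2 : ℝ) * ∏ v, ((p.2 v : ℝ) / (m : ℝ)) ^ (p.2 v)) with hF
  set G : (Fin L → ℕ) × (Fin L → ℕ) → ℝ := fun p =>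
    (Nat.multinomial Finset.univ p.1 : ℝ) * (Nat.multinomial Finset.univ p.2 : ℝ) *
    ∏ v, (((p.1 v + p.2 v : ℕ) : ℝ) / (N : ℝ)) ^ (p.1 v + p.2 v) with hG
  set S := Finset.Nat.antidiagonalTuple L n ×ˢ Finset.Nat.antidiagonalTuple L m with hS
  have step1 : ∑ p ∈ S, G p ≤ ∑ p ∈ S, F p := by
    refine Finset.sum_le_sum fun p hp => ?_
    simp only [hS, Finset.mem_product, Finset.Nat.mem_antidiagonalTuple] at hp
    set θ : Fin L → ℝ := fun v => ((p.1 v + p.2 v : ℕ) : ℝ) / (N : ℝ) with hθ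
    have hθ0 : ∀ v, 0 ≤ θ v := fun v =>
      div_nonneg (Nat.cast_nonneg _) (Nat.cast_nonneg _)
    have hθ1 : ∑ v, θ v ≤ 1 := by
      rw [hθ, ← Finset.sum_div, ← Nat.cast_sum]
      rw [Finset.sum_add_distrib, hp.1, hp.2]
      rw [div_self (Nat.cast_ne_zero.mpr hN.ne')]
    have key : ∏ v, θ v ^ (p.1 v + p.2 v)
        ≤ (∏ v, ((p.1 v : ℝ) / (n : ℝ)) ^ (p.1 v)) *
          (∏ v, ((p.2 v : ℝ) / (m : ℝ)) ^ (p.2 v)) := by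
      have hsplit : ∏ v, θ v ^ (p.1 v + p.2 v)
          = (∏ v, θ v ^ (p.1 v)) * (∏ v, θ v ^ (p.2 v)) := by
        rw [← Finset.prod_mul_distrib]
        exact Finset.prod_congr rfl fun v _ => pow_add _ _ _
      rw [hsplit]
      have h1 := ml_ineq p.1 hp.1 θ hθ0 hθ1
      have h2 := ml_ineq p.2 hp.2 θ hθ0 hθ1
      have p1n : 0 ≤ ∏ v, θ v ^ (p.1 v) :=
        Finset.prod_nonneg fun v _ => pow_nonneg (hθ0 v) _
      have p2n : 0 ≤ ∏ v, θ v ^ (p.2 v) :=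
        Finset.prod_nonneg fun v _ => pow_nonneg (hθ0 v) _
      have rn : 0 ≤ ∏ v, ((p.1 v : ℝ) / (n : ℝ)) ^ (p.1 v) :=
        Finset.prod_nonneg fun v _ =>
          pow_nonneg (div_nonneg (Nat.cast_nonneg _) (Nat.cast_nonneg _)) _
      exact mul_le_mul h1 h2 p2n rn
    have hmn : 0 ≤ (Nat.multinomial Finset.univ p.1 : ℝ) * (Nat.multinomial Finset.univ p.2 : ℝ) :=
      mul_nonneg (Nat.cast_nonneg _) (Nat.cast_nonneg _)
    calc G p = (Nat.multinomial Finset.univ p.1 : ℝ) * (Nat.multinomial Finset.univ p.2 : ℝ) *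
          ∏ v, θ v ^ (p.1 v + p.2 v) := rfl
      _ ≤ (Nat.multinomial Finset.univ p.1 : ℝ) * (Nat.multinomial Finset.univ p.2 : ℝ) *
          ((∏ v, ((p.1 v : ℝ) / (n : ℝ)) ^ (p.1 v)) *
           (∏ v, ((p.2 v : ℝ) / (m : ℝ)) ^ (p.2 v))) := mul_le_mul_of_nonneg_left key hmn
      _ = F p := by rw [hF]; ring
  refine le_trans (le_of_eq ?_) step1
  -- regret L N = ∑ p ∈ S, G p via fiberwise grouping
  have hmaps : ∀ p ∈ S, p.1 + p.2 ∈ Finset.Nat.antidiagonalTuple L N := by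
    intro p hp
    simp only [hS, Finset.mem_product, Finset.Nat.mem_antidiagonalTuple] at hp
    rw [Finset.Nat.mem_antidiagonalTuple]
    simp only [Pi.add_apply]
    rw [Finset.sum_add_distrib, hp.1, hp.2]
  rw [regret, ← Finset.sum_fiberwise_of_maps_to hmaps G]
  refine Finset.sum_congr rfl fun h hh => ?_
  rw [Finset.Nat.mem_antidiagonalTuple] at hh
  have inner : ∀ p ∈ S.filter (fun p => p.1 + p.2 = h),
      G p = (Nat.multinomial Finset.univ p.1 : ℝ) * (Nat.multinomial Finset.univ p.2 : ℝ) *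
        ∏ v, ((h v : ℝ) / (N : ℝ)) ^ (h v) := by
    intro p hp
    rw [Finset.mem_filter] at hp
    rw [hG]
    have : ∀ v, p.1 v + p.2 v = h v := fun v => by
      have := congr_fun hp.2 v; simpa using this
    simp only [this]
  rw [Finset.sum_congr rfl inner, ← Finset.sum_mul]
  have : ∑ p ∈ S.filter (fun p => p.1 + p.2 = h),
      (Nat.multinomial Finset.univ p.1 : ℝ) * (Nat.multinomial Finset.univ p.2 : ℝ)
      = (Nat.multinomial Finset.univ h : ℝ) := by
    rw [← mult_vandermonde n m h hh]
    push_cast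
    rfl
  rw [this]

lemma log_regret_sum_le {L : ℕ} (hL : 1 ≤ L) {J : Type*} (t : Finset J) (g : J → ℕ) :
    Real.log (regret L (∑ j ∈ t, g j)) ≤ ∑ j ∈ t, Real.log (regret L (g j)) := by
  induction t using Finset.cons_induction with
  | empty => simp [regret_zero]
  | cons a t ha ih =>
    rw [Finset.sum_cons, Finset.sum_cons]
    have h1 : regret L (g a + ∑ j ∈ t, g j) ≤ regret L (g a) * regret L (∑ j ∈ t, g j) :=
      regret_add_le L _ _
    have hpos1 : (0 : ℝ) < regret L (g a) := lt_of_lt_of_le one_pos (one_le_regret hL _)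
    have hpos2 : (0 : ℝ) < regret L (∑ j ∈ t, g j) :=
      lt_of_lt_of_le one_pos (one_le_regret hL _)
    calc Real.log (regret L (g a + ∑ j ∈ t, g j))
        ≤ Real.log (regret L (g a) * regret L (∑ j ∈ t, g j)) := by
          apply Real.log_le_log (lt_of_lt_of_le one_pos (one_le_regret hL _)) h1
      _ = Real.log (regret L (g a)) + Real.log (regret L (∑ j ∈ t, g j)) :=
          Real.log_mul hpos1.ne' hpos2.ne'
      _ ≤ Real.log (regret L (g a)) + ∑ j ∈ t, Real.log (regret L (g j)) := by
          linarith [ih]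

/-- Refining a partition of the sample can only increase the total log-regret:
with cells `l : J → ℕ` grouped by `f : J → I` into coarser cells of sizes
`r i = ∑_{j : f j = i} l j`, we have
`∑_i log R(L, r i) ≤ ∑_j log R(L, l j)` for every `L ≥ 2`. -/
theorem sum_log_regret_refine (L : ℕ) (hL : 2 ≤ L)
    (J I : Type*) [Fintype J] [Fintype I] [DecidableEq I]
    (l : J → ℕ) (f : J → I) :
    ∑ i : I, Real.log (regret L (∑ j ∈ Finset.univ.filter (fun j => f j = i), l j)) ≤
      ∑ j : J, Real.log (regret L (l j)) := by
  have hL1 : 1 ≤ L := le_trans one_le_two hL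
  rw [← Finset.sum_fiberwise_of_maps_to (fun j _ => Finset.mem_univ (f j))
    (fun j => Real.log (regret L (l j)))]
  exact Finset.sum_le_sum fun i _ => log_regret_sum_le hL1 _ l
end

section
/- Mononen–Myllymäki formula for the multinomial regret: for all integers L ≥ 1 and n ≥ 1, R(L, n) = ∑_{k=0}^{n} (n)_k · (L−1)^{(k)} / (n^k · k!), where (n)_k = n(n−1)⋯(n−k+1) is the falling factorial and (L−1)^{(k)} = (L−1)L(L+1)⋯(L+k−2) is the rising factorial (both equal to 1 for k = 0). -/
/-!
Since the multinomial coefficient is `n! / ∏ h_v!`, `n^n R(L, n) / n!` is the `L`-fold convolution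
power of the sequence `a^a / a!`, while the claimed right-hand side is
`n! / n^n · ∑_{k + l = n} multichoose (L - 1) k · n^l / l!`. Convolving the latter with `a^a / a!`
raises `L` by one: after exchanging the sums this is Abel's identity
`∑_{a + b = n} (x + a)^a / a! · (y + b)^b / b! = ∑_{j ≤ n} (x + y + n)^j / j!` at `x = 0`, `y = k`,
followed by the hockey-stick identity for `multichoose`. Abel's identity holds by induction on `n`:
the `y`-derivative of each side is the previous case at `y + 1`, and at `y = -x - n` both sides
equal `1`, the left one because the `n`-th forward difference of `t ↦ (x + t)^n` is `n!`.
-/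

open Finset

open Nat

namespace Finset.Nat

theorem sum_antidiagonalTuple_succ {M : Type*} [AddCommMonoid M] (k n : ℕ)
    (f : (Fin (k + 1) → ℕ) → M) :
    ∑ x ∈ antidiagonalTuple (k + 1) n, f x =
      ∑ p ∈ antidiagonal n, ∑ y ∈ antidiagonalTuple k p.2, f (Fin.cons p.1 y) := by
  simp only [sum_eq_multiset_sum]
  change ((List.Nat.antidiagonalTuple (k + 1) n : Multiset _).map f).sum =
    ((List.Nat.antidiagonal n : Multiset (ℕ × ℕ)).map fun p =>
      ((List.Nat.antidiagonalTuple k p.2 : Multiset _).map fun y => f (Fin.cons p.1 y)).sum).sum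
  simp [List.Nat.antidiagonalTuple, List.flatMap, List.sum_flatten, Function.comp_def]

theorem sum_antidiagonal_sum_antidiagonal_comm {M : Type*} [AddCommMonoid M]
    (f : ℕ → ℕ → ℕ → M) (n : ℕ) :
    ∑ p ∈ antidiagonal n, ∑ q ∈ antidiagonal p.2, f p.1 q.1 q.2 =
      ∑ p ∈ antidiagonal n, ∑ q ∈ antidiagonal p.2, f q.1 p.1 q.2 := by
  simp only [sum_antidiagonal_eq_sum_range_succ_mk]
  rw [sum_comm' (t' := range (n + 1)) (s' := fun k => range (n - k + 1))
    (by intros; simp only [mem_range]; omega)]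
  exact sum_congr rfl fun k _ => sum_congr rfl fun a _ => by rw [Nat.sub_right_comm]

end Finset.Nat

theorem Nat.sum_antidiagonal_multichoose (M m : ℕ) :
    ∑ p ∈ antidiagonal m, M.multichoose p.1 = (M + 1).multichoose m := by
  induction m with
  | zero => simp
  | succ m ih => rw [Finset.Nat.sum_antidiagonal_succ', ih, multichoose_succ_succ, add_comm]

theorem eq_of_forall_hasDerivAt {f g f' : ℝ → ℝ} (hf : ∀ y, HasDerivAt f (f' y) y)
    (hg : ∀ y, HasDerivAt g (f' y) y) (y₀ : ℝ) (h : f y₀ = g y₀) : f = g :=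
  eq_of_fderiv_eq (fun y => (hf y).differentiableAt) (fun y => (hg y).differentiableAt)
    (fun y => by rw [(hf y).hasFDerivAt.fderiv, (hg y).hasFDerivAt.fderiv]) y₀ h

theorem sum_range_alternating_choose_mul_add_pow (n : ℕ) (x : ℝ) :
    ∑ k ∈ range (n + 1), (-1) ^ (n - k) * (n.choose k : ℝ) * (x + k) ^ n = n ! := by
  have h := fwdDiff_iter_eq_sum_shift (1 : ℝ) (fun r : ℝ => r ^ n) n x
  rw [fwdDiff_iter_eq_factorial] at h
  simpa [zsmul_eq_mul] using h.symm

noncomputable def abelTerm (x : ℝ) (n : ℕ) : ℝ := (x + n) ^ n / n !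

noncomputable def expTrunc (n : ℕ) (t : ℝ) : ℝ := ∑ j ∈ range (n + 1), t ^ j / j !

@[simp] theorem abelTerm_zero (x : ℝ) : abelTerm x 0 = 1 := by simp [abelTerm]

@[simp] theorem expTrunc_zero_right (n : ℕ) : expTrunc n 0 = 1 := by
  simp [expTrunc, sum_range_succ']

theorem expTrunc_eq_sum_antidiagonal (n : ℕ) (t : ℝ) :
    expTrunc n t = ∑ p ∈ antidiagonal n, t ^ p.1 / p.1 ! := by
  rw [expTrunc, Finset.Nat.sum_antidiagonal_eq_sum_range_succ_mk]

theorem hasDerivAt_abelTerm_succ (n : ℕ) (y : ℝ) :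
    HasDerivAt (abelTerm · (n + 1)) (abelTerm (y + 1) n) y := by
  have h := (((hasDerivAt_id y).add_const ((n + 1 : ℕ) : ℝ)).pow (n + 1)).div_const ((n + 1)! : ℝ)
  refine h.congr_deriv ?_
  simp only [abelTerm, Nat.factorial_succ, id, Nat.add_sub_cancel]
  push_cast
  field_simp
  ring

theorem hasDerivAt_expTrunc_succ (n : ℕ) (t : ℝ) :
    HasDerivAt (expTrunc (n + 1)) (expTrunc n t) t := by
  have h := HasDerivAt.fun_sum (u := range (n + 2)) fun j _ =>
    (hasDerivAt_pow j t).div_const (j ! : ℝ)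
  refine h.congr_deriv ?_
  rw [sum_range_succ' _ (n + 1), expTrunc]
  simp only [Nat.factorial_succ]
  push_cast
  simp only [pow_zero, mul_one, factorial_zero, cast_one, div_one, add_zero]
  refine sum_congr rfl fun j _ => ?_
  field_simp

theorem sum_antidiagonal_abelTerm_mul_abelTerm_neg (n : ℕ) (x : ℝ) :
    ∑ p ∈ antidiagonal n, abelTerm x p.1 * abelTerm (-x - n) p.2 = 1 := by
  rw [Finset.Nat.sum_antidiagonal_eq_sum_range_succ fun a b => abelTerm x a * abelTerm (-x - n) b]
  have hterm : ∀ k ∈ range (n + 1), abelTerm x k * abelTerm (-x - n) (n - k) =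
      (-1) ^ (n - k) * (n.choose k : ℝ) * (x + k) ^ n / n ! := by
    intro k hk
    have hkn : k ≤ n := Nat.lt_succ_iff.mp (mem_range.mp hk)
    have hbase : -x - n + ((n - k : ℕ) : ℝ) = -(x + k) := by push_cast [hkn]; ring
    have hpow : (x + k) ^ n = (x + k) ^ k * (x + k) ^ (n - k) := by
      rw [← pow_add, Nat.add_sub_cancel' hkn]
    rw [abelTerm, abelTerm, hbase, neg_pow, Nat.cast_choose ℝ hkn, hpow]
    field_simp
  rw [sum_congr rfl hterm, ← sum_div, sum_range_alternating_choose_mul_add_pow,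
    div_self (by positivity)]

theorem sum_antidiagonal_abelTerm_mul_abelTerm (n : ℕ) (x y : ℝ) :
    ∑ p ∈ antidiagonal n, abelTerm x p.1 * abelTerm y p.2 = expTrunc n (x + y + n) := by
  induction n generalizing y with
  | zero => simp [expTrunc]
  | succ n ih =>
    have hf : ∀ y, HasDerivAt (fun y => ∑ p ∈ antidiagonal (n + 1), abelTerm x p.1 * abelTerm y p.2)
        (expTrunc n (x + (y + 1) + n)) y := by
      intro y
      simp only [Finset.Nat.sum_antidiagonal_succ', abelTerm_zero, ← ih]
      exact (HasDerivAt.fun_sum fun p _ => (hasDerivAt_abelTerm_succ p.2 y).const_mul _).const_add _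
    have hg : ∀ y, HasDerivAt (fun y => expTrunc (n + 1) (x + y + (n + 1 : ℕ)))
        (expTrunc n (x + (y + 1) + n)) y := by
      intro y
      refine ((hasDerivAt_expTrunc_succ n _).comp y
        (((hasDerivAt_id y).const_add x).add_const ((n + 1 : ℕ) : ℝ))).congr_deriv ?_
      rw [mul_one]
      congr 1
      push_cast
      simp only [id]
      ring
    refine congrFun (eq_of_forall_hasDerivAt hf hg (-x - (n + 1 : ℕ)) ?_) y
    rw [sum_antidiagonal_abelTerm_mul_abelTerm_neg,
      show x + (-x - (n + 1 : ℕ)) + (n + 1 : ℕ) = 0 by ring, expTrunc_zero_right]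

theorem sum_antidiagonal_abelTerm_zero_mul_sum (M n : ℕ) :
    ∑ p ∈ antidiagonal n, abelTerm 0 p.1 *
        ∑ q ∈ antidiagonal p.2, (M.multichoose q.1 : ℝ) * abelTerm q.1 q.2 =
      ∑ p ∈ antidiagonal n, ((M + 1).multichoose p.1 : ℝ) * abelTerm p.1 p.2 := by
  calc ∑ p ∈ antidiagonal n, abelTerm 0 p.1 *
          ∑ q ∈ antidiagonal p.2, (M.multichoose q.1 : ℝ) * abelTerm q.1 q.2
      = ∑ p ∈ antidiagonal n, ∑ q ∈ antidiagonal p.2,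
          (M.multichoose p.1 : ℝ) * (abelTerm 0 q.1 * abelTerm p.1 q.2) := by
        simp only [mul_sum, mul_left_comm (abelTerm 0 _)]
        exact Finset.Nat.sum_antidiagonal_sum_antidiagonal_comm
          (fun a k l => (M.multichoose k : ℝ) * (abelTerm 0 a * abelTerm k l)) n
    _ = ∑ p ∈ antidiagonal n, ∑ q ∈ antidiagonal p.2,
          (M.multichoose p.1 : ℝ) * ((n : ℝ) ^ q.1 / q.1 !) := by
        refine sum_congr rfl fun p hp => ?_
        rw [← mul_sum, ← mul_sum, sum_antidiagonal_abelTerm_mul_abelTerm,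
          expTrunc_eq_sum_antidiagonal, ← mem_antidiagonal.mp hp]
        push_cast
        ring_nf
    _ = ∑ p ∈ antidiagonal n, ((M + 1).multichoose p.1 : ℝ) * abelTerm p.1 p.2 := by
        rw [Finset.Nat.sum_antidiagonal_sum_antidiagonal_comm
          (fun k j _ => (M.multichoose k : ℝ) * ((n : ℝ) ^ j / j !)),
          ← Finset.Nat.sum_antidiagonal_swap]
        refine sum_congr rfl fun p hp => ?_
        dsimp only [Prod.fst_swap, Prod.snd_swap]
        rw [abelTerm, ← sum_antidiagonal_multichoose, ← mem_antidiagonal.mp hp]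
        push_cast
        rw [sum_mul]

theorem sum_antidiagonalTuple_prod_abelTerm_zero (M n : ℕ) :
    ∑ h ∈ Finset.Nat.antidiagonalTuple (M + 1) n, ∏ v, abelTerm 0 (h v) =
      ∑ p ∈ antidiagonal n, (M.multichoose p.1 : ℝ) * abelTerm p.1 p.2 := by
  induction M generalizing n with
  | zero =>
    rw [Finset.Nat.sum_antidiagonal_eq_sum_range_succ
      (fun k l => (multichoose 0 k : ℝ) * abelTerm k l), sum_range_succ']
    simp
  | succ M ih =>
    rw [Finset.Nat.sum_antidiagonalTuple_succ, ← sum_antidiagonal_abelTerm_zero_mul_sum]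
    refine sum_congr rfl fun p _ => ?_
    rw [← ih, mul_sum]
    refine sum_congr rfl fun y _ => ?_
    rw [Fin.prod_univ_succ]
    simp only [Fin.cons_zero, Fin.cons_succ]

theorem regret_eq_factorial_div_pow_mul_sum (L n : ℕ) :
    regret L n = n ! / n ^ n * ∑ h ∈ Finset.Nat.antidiagonalTuple L n, ∏ v, abelTerm 0 (h v) := by
  rw [regret, mul_sum]
  refine sum_congr rfl fun h hh => ?_
  rw [Finset.Nat.mem_antidiagonalTuple] at hh
  have hmult : (Nat.multinomial univ h : ℝ) = n ! / ∏ v, ((h v) ! : ℝ) := by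
    rw [eq_div_iff (by positivity), mul_comm, ← hh]
    exact_mod_cast Nat.multinomial_spec univ h
  simp only [abelTerm, zero_add, div_pow, prod_div_distrib, prod_pow_eq_pow_sum, hh, hmult]
  ring

theorem factorial_div_pow_self_mul_multichoose_mul_abelTerm {M k l n : ℕ} (h : k + l = n) :
    n ! / (n : ℝ) ^ n * (M.multichoose k * abelTerm k l) =
      n.descFactorial k * M.ascFactorial k / ((n : ℝ) ^ k * k !) := by
  have hn : (n : ℝ) ^ n = n ^ k * n ^ l := by rw [← pow_add, h]
  have hpow : (n : ℝ) ^ k * n ^ l ≠ 0 := by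
    rw [← hn]
    exact_mod_cast Nat.pow_self_pos.ne'
  have hfact : (n.descFactorial k : ℝ) * l ! = n ! := by
    rw [mul_comm, show l = n - k by omega]
    exact_mod_cast Nat.factorial_mul_descFactorial (by omega : k ≤ n)
  rw [abelTerm, ← Nat.cast_add, h, hn, Nat.ascFactorial_eq_factorial_mul_choose',
    ← multichoose_eq, ← hfact]
  field_simp [left_ne_zero_of_mul hpow, right_ne_zero_of_mul hpow]
  push_cast
  ring

theorem regret_eq_mononen_myllymaki_general (L : ℕ) (hL : 1 ≤ L) (n : ℕ) :
    regret L n =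
      ∑ k ∈ Finset.range (n + 1),
        (Nat.descFactorial n k : ℝ) * (Nat.ascFactorial (L - 1) k : ℝ) /
          ((n : ℝ) ^ k * (Nat.factorial k : ℝ)) := by
  obtain ⟨M, rfl⟩ := Nat.exists_eq_add_of_le' hL
  rw [Nat.add_sub_cancel, regret_eq_factorial_div_pow_mul_sum,
    sum_antidiagonalTuple_prod_abelTerm_zero, mul_sum,
    Finset.Nat.sum_antidiagonal_eq_sum_range_succ
      (fun k l => (n ! / (n : ℝ) ^ n) * (M.multichoose k * abelTerm k l))]
  refine sum_congr rfl fun k hk => ?_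
  exact factorial_div_pow_self_mul_multichoose_mul_abelTerm
    (Nat.add_sub_cancel' (mem_range_succ_iff.mp hk))

/-- The Mononen–Myllymäki formula for the multinomial regret: for `L ≥ 1` and
`n ≥ 1`, `R(L, n) = ∑_{k=0}^{n} (n)_k · (L−1)^{(k)} / (n^k · k!)`, with the
falling factorial `(n)_k = n(n−1)⋯(n−k+1)` and the rising factorial
`(L−1)^{(k)} = (L−1)L⋯(L+k−2)`. -/
theorem regret_eq_mononen_myllymaki (L : ℕ) (hL : 1 ≤ L) (n : ℕ) (hn : 1 ≤ n) :
    regret L n =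
      ∑ k ∈ Finset.range (n + 1),
        (Nat.descFactorial n k : ℝ) * (Nat.ascFactorial (L - 1) k : ℝ) /
          ((n : ℝ) ^ k * (Nat.factorial k : ℝ)) :=
  regret_eq_mononen_myllymaki_general L hL n
end

section
/- The ratio of the top diagonal regret summands is nonincreasing: for every integer L ≥ 2, the sequence n ↦ (n + L − 2) · (n − 1)^{n−1} / n^n is nonincreasing for integers n ≥ 2. -/
/-- The ratio of consecutive top diagonal regret summands,
`n ↦ (n + L − 2) · (n − 1)^{n−1} / n^n`, is nonincreasing for `n ≥ 2`,
for every `L ≥ 2`. -/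
theorem diag_ratio_antitone (L : ℕ) (hL : 2 ≤ L) (n : ℕ) (hn : 2 ≤ n) :
    ((n + 1 + L - 2 : ℕ) : ℝ) * (n : ℝ) ^ n / ((n : ℝ) + 1) ^ (n + 1) ≤
      ((n + L - 2 : ℕ) : ℝ) * ((n - 1 : ℕ) : ℝ) ^ (n - 1) / (n : ℝ) ^ n := by
  obtain ⟨k, rfl⟩ : ∃ k, n = k + 2 := ⟨n - 2, by omega⟩
  have hc1 : (k + 2 + 1 + L - 2 : ℕ) = k + L + 1 := by omega
  have hc2 : (k + 2 + L - 2 : ℕ) = k + L := by omega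
  have hc3 : (k + 2 - 1 : ℕ) = k + 1 := by omega
  rw [hc1, hc2, hc3]
  push_cast
  set c : ℝ := (k : ℝ) with hcdef
  have hc0 : (0:ℝ) ≤ c := Nat.cast_nonneg k
  have hl : (2:ℝ) ≤ (L:ℝ) := by exact_mod_cast hL
  set l : ℝ := (L : ℝ) with hldef
  rw [div_le_div_iff₀ (by positivity) (by positivity)]
  have hy : (0:ℝ) < (c+2)*(c+2) := by positivity
  have hber : 1 + ((k+1 : ℕ):ℝ) * (-(1/((c+2)*(c+2)))) ≤ (1 + (-(1/((c+2)*(c+2)))))^(k+1) := by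
    apply one_add_mul_le_pow
    have h1 : 1/((c+2)*(c+2)) ≤ 1 := by
      rw [div_le_one hy]; nlinarith
    linarith
  have hmul := mul_le_mul_of_nonneg_right hber (le_of_lt (pow_pos hy (k+1)))
  have key : ((c+2)*(c+2) - (c+1)) * (((c+2)*(c+2))^k) ≤ ((c+1)*(c+3))^(k+1) := by
    have heq1 : (1 + ((k+1 : ℕ):ℝ) * (-(1/((c+2)*(c+2))))) * ((c+2)*(c+2))^(k+1)
        = ((c+2)*(c+2) - (c+1)) * ((c+2)*(c+2))^k := by
      push_cast
      rw [pow_succ]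
      field_simp
      ring
    have heq2 : (1 + (-(1/((c+2)*(c+2)))))^(k+1) * ((c+2)*(c+2))^(k+1)
        = ((c+1)*(c+3))^(k+1) := by
      rw [← mul_pow]
      congr 1
      field_simp
      ring
    rw [heq1, heq2] at hmul
    exact hmul
  rw [mul_pow, mul_pow] at key
  have hfin : (c+l+1)*(c+2)^4 ≤ (c+l)*(c+3)^2*(c*c+3*c+3) := by
    nlinarith [mul_nonneg (by linarith : (0:ℝ) ≤ l - 2) (by positivity : (0:ℝ) ≤ (c+2)^3 + 1),
      mul_nonneg (by linarith : (0:ℝ) ≤ c + l + 1) (by linarith : (0:ℝ) ≤ c + 2)]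
  have hyk : (0:ℝ) ≤ (c+2)^k * (c+2)^k := by positivity
  calc (c+l+1)*(c+2)^(k+2)*(c+2)^(k+2) = ((c+l+1)*(c+2)^4) * ((c+2)^k*(c+2)^k) := by ring
    _ ≤ ((c+l)*(c+3)^2*(c*c+3*c+3)) * ((c+2)^k*(c+2)^k) :=
        mul_le_mul_of_nonneg_right hfin hyk
    _ = ((c+l)*(c+3)^2) * (((c+2)*(c+2) - (c+1)) * ((c+2)^k*(c+2)^k)) := by ring
    _ ≤ ((c+l)*(c+3)^2) * ((c+1)^(k+1)*(c+3)^(k+1)) := by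
        apply mul_le_mul_of_nonneg_left key
        positivity
    _ = (c+l)*(c+1)^(k+1)*((c+2)+1)^(k+2+1) := by ring
end
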